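/- arXiv:2408.06877 — 2 statements merged into one kernel-verified Lean document; each statement's English description precedes it below -/
import Mathlib

section
/- Let ρ̄ be analytic with ρ̄(0) = ρ₀ > 0, w analytic with w(0) = ω₀. Suppose x₁(t,x) = a₁ - √(a₁² - a₀) and x₂(t,x) = a₁ + √(a₁² - a₀) with a₀, a₁ analytic vanishing at (t₀,0). Then there exist analytic functions M(t,x), G(t,x) near (t₀,0), with M(t₀,0) = 2ρ̄(0) and G(t₀,0) = 2ρ̄(0)w(0), such that ∫_{x₁}^{x₂} ρ̄(ξ)dξ = M(t,x)·√(a₁² - a₀) and ∫_{x₁}^{x₂} ρ̄(ξ)w(ξ)dξ = G(t,x)·√(a₁² - a₀). -/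
/-!
Write `c = a₁`, `v = a₁² - a₀`, `s = √v`. If `F = ∑ bₙ ξⁿ` is the primitive of the integrand with
`F 0 = 0`, the integral over `[c - s, c + s]` is `F (c + s) - F (c - s)`, which is odd in `s`.
To see that it is `s` times an analytic function of `(c, v)`, evaluate the power series of `F` at
the `2 × 2` matrix `X = !![c, v / ε; ε, c]`: it has eigenvectors `(±s, ε)` with eigenvalues
`c ± s`, so `F (c + s) - F (c - s) = s · 2 F(X)₁₀ / ε`, and `F(X)` is analytic in `(c, v)` because
`X` is affine in `(c, v)` and stays inside the disc of convergence when `ε` is small.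
-/

open Topology intervalIntegral FormalMultilinearSeries Matrix

noncomputable def primitiveCoeff (a : ℕ → ℝ) : ℕ → ℝ
  | 0 => 0
  | n + 1 => a n / (n + 1)

theorem radius_le_radius_ofScalars_primitiveCoeff (p : FormalMultilinearSeries ℝ ℝ ℝ)
    (A : Type*) [NormedRing A] [NormedAlgebra ℝ A] :
    p.radius ≤ (ofScalars A (primitiveCoeff p.coeff)).radius := by
  refine ENNReal.le_of_forall_nnreal_lt fun r hr => ?_
  obtain ⟨C, hC0, hC⟩ := p.norm_mul_pow_le_of_lt_radius hr
  refine le_radius_of_bound _ (C * r) fun n => ?_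
  cases n with
  | zero => simpa [primitiveCoeff, ofScalars_eq_zero_of_scalar_zero] using by positivity
  | succ n =>
    calc ‖ofScalars A (primitiveCoeff p.coeff) (n + 1)‖ * (r : ℝ) ^ (n + 1)
        ≤ ‖p.coeff n‖ / (n + 1) * r ^ (n + 1) := by
          gcongr
          refine (ofScalars_norm_le A _ _ n.succ_pos).trans_eq ?_
          simp [primitiveCoeff, norm_div]
          norm_cast
      _ ≤ ‖p n‖ * r ^ n * r := by
          rw [norm_apply_eq_norm_coef, pow_succ, ← mul_assoc]
          gcongr
          exact div_le_self (norm_nonneg _) (by linarith)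
      _ ≤ C * r := by gcongr; exact hC n

theorem HasFPowerSeriesOnBall.hasSum_intervalIntegral {f : ℝ → ℝ}
    {p : FormalMultilinearSeries ℝ ℝ ℝ} {R : ENNReal} (hf : HasFPowerSeriesOnBall f p 0 R)
    {x y : ℝ} (hx : x ∈ Metric.eball 0 R) (hy : y ∈ Metric.eball 0 R) :
    HasSum (fun n => primitiveCoeff p.coeff n * (y ^ n - x ^ n)) (∫ ξ in x..y, f ξ) := by
  rw [Metric.mem_eball, edist_zero_right, enorm_eq_nnnorm] at hx hy
  set r : NNReal := max ‖x‖₊ ‖y‖₊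
  have hrR : (r : ENNReal) < R := by simpa [r] using And.intro hx hy
  have hball : Set.uIoc x y ⊆ Metric.closedBall 0 r := by
    refine Set.uIoc_subset_uIcc.trans (Set.OrdConnected.uIcc_subset ?_ ?_ ?_)
    · rw [Real.closedBall_eq_Icc]; exact Set.ordConnected_Icc
    · simp [r]
    · simp [r]
  have htermwise : HasSum (fun n => ∫ ξ in x..y, p.coeff n * ξ ^ n) (∫ ξ in x..y, f ξ) := by
    refine hasSum_integral_of_dominated_convergence (fun n _ => ‖p n‖ * r ^ n)
      (fun n => (continuous_const.mul (continuous_pow n)).aestronglyMeasurable) ?_ ?_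
      intervalIntegrable_const ?_
    · refine fun n => Filter.Eventually.of_forall fun t ht => ?_
      rw [norm_mul, norm_pow, norm_apply_eq_norm_coef]
      gcongr
      exact mem_closedBall_zero_iff.mp (hball ht)
    · exact Filter.Eventually.of_forall fun t _ => p.summable_norm_mul_pow (hrR.trans_le hf.r_le)
    · refine Filter.Eventually.of_forall fun t ht => ?_
      have ht' : t ∈ Metric.eball (0 : ℝ) R := by
        rw [Metric.mem_eball, edist_zero_right, enorm_eq_nnnorm]
        refine lt_of_le_of_lt ?_ hrR
        exact_mod_cast mem_closedBall_zero_iff.mp (hball ht)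
      simpa [apply_eq_pow_smul_coeff, mul_comm] using hf.hasSum ht'
  have hterm (n : ℕ) : ∫ ξ in x..y, p.coeff n * ξ ^ n
      = primitiveCoeff p.coeff (n + 1) * (y ^ (n + 1) - x ^ (n + 1)) := by
    rw [integral_const_mul, integral_pow, primitiveCoeff]
    ring
  rw [funext hterm] at htermwise
  exact (hasSum_nat_add_iff' 1).mp (by simpa [primitiveCoeff] using htermwise)

theorem ofScalarsSum_eq_of_sq_eq_zero {𝕜 A : Type*} [Field 𝕜] [Ring A] [Algebra 𝕜 A]
    [TopologicalSpace A] [IsTopologicalRing A] (c : ℕ → 𝕜) {Y : A} (hY : Y ^ 2 = 0) :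
    ofScalarsSum c Y = c 0 • 1 + c 1 • Y := by
  rw [ofScalars_sum_eq, tsum_eq_sum (s := Finset.range 2)]
  · simp [Finset.sum_range_succ]
  · intro n hn
    rw [pow_eq_zero_of_le (by simp at hn; omega) hY, smul_zero]

theorem Matrix.hasSum_mulVec_of_mulVec_eq_smul {n R : Type*} [Fintype n] [DecidableEq n]
    [CommRing R] [TopologicalSpace R] [IsTopologicalRing R]
    {Y : Matrix n n R} {u : n → R} {μ : R} (hYu : Y *ᵥ u = μ • u) {b : ℕ → R}
    {Φ : Matrix n n R} (hΦ : HasSum (fun k => b k • Y ^ k) Φ) :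
    HasSum (fun k => (b k * μ ^ k) • u) (Φ *ᵥ u) := by
  have hpow (k : ℕ) : Y ^ k *ᵥ u = μ ^ k • u := by
    induction k with
    | zero => simp
    | succ k ih =>
      rw [pow_succ', ← mulVec_mulVec, ih, mulVec_smul, hYu, smul_smul, pow_succ]
  have := hΦ.map (mulVec.addMonoidHomLeft u) (continuous_id.matrix_mulVec continuous_const)
  simpa [Function.comp_def, mulVec.addMonoidHomLeft, smul_mulVec, hpow, smul_smul] using this

/-- For `v = s ^ 2` the eigenvalues are `c ± s`, with eigenvectors `(± s, ε)`; the parameter `ε`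
makes the matrix at `c = v = 0` as small as we like. -/
noncomputable def sqrtPairMatrix (ε c v : ℝ) : Matrix (Fin 2) (Fin 2) ℝ := !![c, v / ε; ε, c]

theorem sqrtPairMatrix_sq_mulVec {ε : ℝ} (hε : ε ≠ 0) (c s : ℝ) :
    sqrtPairMatrix ε c (s ^ 2) *ᵥ ![s, ε] = (c + s) • ![s, ε] := by
  ext i
  fin_cases i <;> simp [sqrtPairMatrix] <;> field_simp; ring

theorem hasSum_mul_sub_pow_of_hasSum_sqrtPairMatrix {ε : ℝ} (hε : ε ≠ 0) {c s : ℝ} {b : ℕ → ℝ}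
    {Φ : Matrix (Fin 2) (Fin 2) ℝ} (hΦ : HasSum (fun k => b k • sqrtPairMatrix ε c (s ^ 2) ^ k) Φ) :
    HasSum (fun k => b k * ((c + s) ^ k - (c - s) ^ k)) (s * (2 * Φ 1 0 / ε)) := by
  have hev : sqrtPairMatrix ε c (s ^ 2) *ᵥ ![-s, ε] = (c - s) • ![-s, ε] := by
    simpa [neg_sq, ← sub_eq_add_neg] using sqrtPairMatrix_sq_mulVec hε c (-s)
  have hplus :=
    Pi.hasSum.mp (hasSum_mulVec_of_mulVec_eq_smul (sqrtPairMatrix_sq_mulVec hε c s) hΦ) 1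
  have hminus := Pi.hasSum.mp (hasSum_mulVec_of_mulVec_eq_smul hev hΦ) 1
  have h := (hplus.sub hminus).div_const ε
  have hterms :
      (fun k => (((b k * (c + s) ^ k) • ![s, ε]) 1 - ((b k * (c - s) ^ k) • ![-s, ε]) 1) / ε)
        = fun k => b k * ((c + s) ^ k - (c - s) ^ k) := by
    funext k; simp; field_simp
  have hsum : ((Φ *ᵥ ![s, ε]) 1 - (Φ *ᵥ ![-s, ε]) 1) / ε = s * (2 * Φ 1 0 / ε) := by
    simp [mulVec, dotProduct, Fin.sum_univ_two]; ring
  rwa [hterms, hsum] at h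

/-- For `q = (c, v)` with `0 < v` small this is `(F (c + √v) - F (c - √v)) / √v`, where
`F = ∑ bₙ ξⁿ`; in this form it is analytic in `q`. -/
noncomputable def sqrtDiffQuotient (b : ℕ → ℝ) (ε : ℝ) (q : ℝ × ℝ) : ℝ :=
  2 * ofScalarsSum (E := Matrix (Fin 2) (Fin 2) ℝ) b (sqrtPairMatrix ε q.1 q.2) 1 0 / ε

theorem sqrtDiffQuotient_zero (b : ℕ → ℝ) {ε : ℝ} (hε : ε ≠ 0) :
    sqrtDiffQuotient b ε 0 = 2 * b 1 := by
  have hsq : sqrtPairMatrix ε 0 0 ^ 2 = 0 := by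
    ext i j; fin_cases i <;> fin_cases j <;> simp [sqrtPairMatrix, sq]
  simp only [sqrtDiffQuotient, Prod.fst_zero, Prod.snd_zero, ofScalarsSum_eq_of_sq_eq_zero b hsq]
  simp [sqrtPairMatrix]
  field_simp

section

attribute [local instance] Matrix.linftyOpNormedRing Matrix.linftyOpNormedAlgebra

theorem norm_sqrtPairMatrix_zero {ε : ℝ} (hε : 0 ≤ ε) : ‖sqrtPairMatrix ε 0 0‖ = ε := by
  rw [linfty_opNorm_def]
  simp [sqrtPairMatrix, Fin.univ_succ, hε]

theorem analyticAt_sqrtPairMatrix (ε : ℝ) (q : ℝ × ℝ) :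
    AnalyticAt ℝ (fun x : ℝ × ℝ => sqrtPairMatrix ε x.1 x.2) q := by
  have hX : (fun x : ℝ × ℝ => sqrtPairMatrix ε x.1 x.2)
      = fun x => x.1 • (1 : Matrix (Fin 2) (Fin 2) ℝ) + x.2 • !![0, ε⁻¹; 0, 0]
          + !![0, 0; ε, 0] := by
    funext x; ext i j; fin_cases i <;> fin_cases j <;> simp [sqrtPairMatrix, div_eq_mul_inv]
  rw [hX]
  exact ((analyticAt_fst.smul analyticAt_const).add (analyticAt_snd.smul analyticAt_const)).add
    analyticAt_const

variable {b : ℕ → ℝ} {ε : ℝ}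

theorem sqrtPairMatrix_zero_mem_eball (hε : 0 ≤ ε)
    (hεb : ENNReal.ofReal ε < (ofScalars (Matrix (Fin 2) (Fin 2) ℝ) b).radius) :
    sqrtPairMatrix ε 0 0 ∈ Metric.eball 0 (ofScalars (Matrix (Fin 2) (Fin 2) ℝ) b).radius := by
  simpa [edist_zero_right, ← ofReal_norm, norm_sqrtPairMatrix_zero hε] using hεb

theorem analyticAt_sqrtDiffQuotient (hε : 0 ≤ ε)
    (hεb : ENNReal.ofReal ε < (ofScalars (Matrix (Fin 2) (Fin 2) ℝ) b).radius) :
    AnalyticAt ℝ (sqrtDiffQuotient b ε) 0 := by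
  have hmem := sqrtPairMatrix_zero_mem_eball hε hεb
  have hsum : AnalyticAt ℝ (ofScalarsSum b) (sqrtPairMatrix ε 0 0) :=
    ((ofScalars (Matrix (Fin 2) (Fin 2) ℝ) b).hasFPowerSeriesOnBall
      (pos_of_gt hmem)).analyticAt_of_mem hmem
  have hentry := (LinearMap.toContinuousLinearMap
    (entryLinearMap ℝ ℝ (1 : Fin 2) (0 : Fin 2))).analyticAt (ofScalarsSum b (sqrtPairMatrix ε 0 0))
  exact (analyticAt_const.mul (hentry.comp_of_eq
    (hsum.comp_of_eq (analyticAt_sqrtPairMatrix ε 0) (by simp)) rfl)).div_const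

theorem eventually_hasSum_sub_pow_sqrtDiffQuotient (hε : 0 < ε)
    (hεb : ENNReal.ofReal ε < (ofScalars (Matrix (Fin 2) (Fin 2) ℝ) b).radius) :
    ∀ᶠ q in 𝓝 (0 : ℝ × ℝ), 0 ≤ q.2 → HasSum (fun k => b k * ((q.1 + √q.2) ^ k - (q.1 - √q.2) ^ k))
      (√q.2 * sqrtDiffQuotient b ε q) := by
  have hnear : ∀ᶠ q in 𝓝 (0 : ℝ × ℝ),
      sqrtPairMatrix ε q.1 q.2 ∈ Metric.eball 0 (ofScalars (Matrix (Fin 2) (Fin 2) ℝ) b).radius :=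
    (analyticAt_sqrtPairMatrix ε 0).continuousAt.preimage_mem_nhds
      (Metric.isOpen_eball.mem_nhds (sqrtPairMatrix_zero_mem_eball hε.le hεb))
  filter_upwards [hnear] with q hq hq₂
  have hΦ := ofScalars_apply_eq' b (sqrtPairMatrix ε q.1 q.2) ▸
    (ofScalars (Matrix (Fin 2) (Fin 2) ℝ) b).hasSum hq
  rw [← Real.sq_sqrt hq₂] at hΦ
  have h := hasSum_mul_sub_pow_of_hasSum_sqrtPairMatrix hε.ne' hΦ
  rw [Real.sq_sqrt hq₂] at h
  exact h

theorem AnalyticAt.exists_intervalIntegral_sqrt_eq_mul {f : ℝ → ℝ} (hf : AnalyticAt ℝ f 0) :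
    ∃ H : ℝ × ℝ → ℝ, AnalyticAt ℝ H 0 ∧ H 0 = 2 * f 0 ∧
      ∀ᶠ q in 𝓝 (0 : ℝ × ℝ), 0 ≤ q.2 →
        ∫ ξ in q.1 - √q.2..q.1 + √q.2, f ξ = H q * √q.2 := by
  obtain ⟨p, R, hp⟩ := hf
  obtain ⟨ε, hε, hε0, hεR⟩ := ENNReal.lt_iff_exists_real_btwn.mp hp.r_pos
  replace hε0 : 0 < ε := ENNReal.ofReal_pos.mp hε0
  have hεb : ENNReal.ofReal ε
      < (ofScalars (Matrix (Fin 2) (Fin 2) ℝ) (primitiveCoeff p.coeff)).radius :=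
    hεR.trans_le (hp.r_le.trans (radius_le_radius_ofScalars_primitiveCoeff p _))
  have hnear (g : ℝ × ℝ → ℝ) (hg : Continuous g) (hg0 : g 0 = 0) :
      ∀ᶠ q in 𝓝 (0 : ℝ × ℝ), g q ∈ Metric.eball 0 R :=
    hg.continuousAt.preimage_mem_nhds (Metric.isOpen_eball.mem_nhds (by simpa [hg0] using hp.r_pos))
  refine ⟨sqrtDiffQuotient (primitiveCoeff p.coeff) ε, analyticAt_sqrtDiffQuotient hε hεb, ?_, ?_⟩
  · rw [sqrtDiffQuotient_zero _ hε0.ne']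
    simp [primitiveCoeff, ← hp.hasFPowerSeriesAt.coeff_zero 1]
  · filter_upwards [eventually_hasSum_sub_pow_sqrtDiffQuotient hε0 hεb,
      hnear (fun q => q.1 - √q.2) (by fun_prop) (by simp),
      hnear (fun q => q.1 + √q.2) (by fun_prop) (by simp)] with q hsum hminus hplus hq
    rw [mul_comm]
    exact (hp.hasSum_intervalIntegral hminus hplus).unique (hsum hq)

end

theorem mass_and_momentum_integrals_analytic_factorization_general
    (ρb w : ℝ → ℝ) (t₀ : ℝ)
    (hρ : AnalyticOnNhd ℝ ρb Set.univ) (hw : AnalyticOnNhd ℝ w Set.univ)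
    (a₀ a₁ : ℝ → ℝ → ℝ)
    (ha₀ : AnalyticAt ℝ (fun p : ℝ × ℝ => a₀ p.1 p.2) (t₀, 0))
    (ha₁ : AnalyticAt ℝ (fun p : ℝ × ℝ => a₁ p.1 p.2) (t₀, 0))
    (h00 : a₀ t₀ 0 = 0) (h10 : a₁ t₀ 0 = 0)
    (x₁ x₂ : ℝ → ℝ → ℝ)
    (hx₁ : ∀ t x, x₁ t x = a₁ t x - Real.sqrt ((a₁ t x) ^ 2 - a₀ t x))
    (hx₂ : ∀ t x, x₂ t x = a₁ t x + Real.sqrt ((a₁ t x) ^ 2 - a₀ t x)) :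
    ∃ M G : ℝ → ℝ → ℝ,
      AnalyticAt ℝ (fun p : ℝ × ℝ => M p.1 p.2) (t₀, 0) ∧
      AnalyticAt ℝ (fun p : ℝ × ℝ => G p.1 p.2) (t₀, 0) ∧
      M t₀ 0 = 2 * ρb 0 ∧ G t₀ 0 = 2 * ρb 0 * w 0 ∧
      ∀ᶠ p : ℝ × ℝ in 𝓝 (t₀, 0), 0 ≤ (a₁ p.1 p.2) ^ 2 - a₀ p.1 p.2 →
        (∫ ξ in (x₁ p.1 p.2)..(x₂ p.1 p.2), ρb ξ) =
          M p.1 p.2 * Real.sqrt ((a₁ p.1 p.2) ^ 2 - a₀ p.1 p.2) ∧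
        (∫ ξ in (x₁ p.1 p.2)..(x₂ p.1 p.2), ρb ξ * w ξ) =
          G p.1 p.2 * Real.sqrt ((a₁ p.1 p.2) ^ 2 - a₀ p.1 p.2) := by
  obtain ⟨M, hM, hM0, hMint⟩ := (hρ 0 trivial).exists_intervalIntegral_sqrt_eq_mul
  obtain ⟨G, hG, hG0, hGint⟩ :=
    ((hρ 0 trivial).mul (hw 0 trivial)).exists_intervalIntegral_sqrt_eq_mul
  set Φ : ℝ × ℝ → ℝ × ℝ := fun p => (a₁ p.1 p.2, a₁ p.1 p.2 ^ 2 - a₀ p.1 p.2)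
  have hΦ : AnalyticAt ℝ Φ (t₀, 0) := ha₁.prod ((ha₁.pow 2).sub ha₀)
  have hΦ0 : Φ (t₀, 0) = 0 := by simp [Φ, h00, h10]
  have hlim : Filter.Tendsto Φ (𝓝 (t₀, 0)) (𝓝 0) := hΦ0 ▸ hΦ.continuousAt
  refine ⟨fun t x => M (Φ (t, x)), fun t x => G (Φ (t, x)), hM.comp_of_eq hΦ hΦ0,
    hG.comp_of_eq hΦ hΦ0, by simp [hΦ0, hM0], by simp [hΦ0, hG0, mul_assoc], ?_⟩
  filter_upwards [hlim.eventually hMint, hlim.eventually hGint] with p hMp hGp hp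
  rw [hx₁, hx₂]
  exact ⟨hMp hp, hGp hp⟩

theorem mass_and_momentum_integrals_analytic_factorization
    (ρb w : ℝ → ℝ) (ρ₀ ω₀ t₀ : ℝ)
    (hρ : AnalyticOnNhd ℝ ρb Set.univ) (hw : AnalyticOnNhd ℝ w Set.univ)
    (hρ0 : ρb 0 = ρ₀) (hρpos : 0 < ρ₀) (hw0 : w 0 = ω₀)
    (a₀ a₁ : ℝ → ℝ → ℝ)
    (ha₀ : AnalyticAt ℝ (fun p : ℝ × ℝ => a₀ p.1 p.2) (t₀, 0))
    (ha₁ : AnalyticAt ℝ (fun p : ℝ × ℝ => a₁ p.1 p.2) (t₀, 0))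
    (h00 : a₀ t₀ 0 = 0) (h10 : a₁ t₀ 0 = 0)
    (x₁ x₂ : ℝ → ℝ → ℝ)
    (hx₁ : ∀ t x, x₁ t x = a₁ t x - Real.sqrt ((a₁ t x) ^ 2 - a₀ t x))
    (hx₂ : ∀ t x, x₂ t x = a₁ t x + Real.sqrt ((a₁ t x) ^ 2 - a₀ t x)) :
    ∃ M G : ℝ → ℝ → ℝ,
      AnalyticAt ℝ (fun p : ℝ × ℝ => M p.1 p.2) (t₀, 0) ∧
      AnalyticAt ℝ (fun p : ℝ × ℝ => G p.1 p.2) (t₀, 0) ∧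
      M t₀ 0 = 2 * ρb 0 ∧ G t₀ 0 = 2 * ρb 0 * w 0 ∧
      ∀ᶠ p : ℝ × ℝ in 𝓝 (t₀, 0), 0 ≤ (a₁ p.1 p.2) ^ 2 - a₀ p.1 p.2 →
        (∫ ξ in (x₁ p.1 p.2)..(x₂ p.1 p.2), ρb ξ) =
          M p.1 p.2 * Real.sqrt ((a₁ p.1 p.2) ^ 2 - a₀ p.1 p.2) ∧
        (∫ ξ in (x₁ p.1 p.2)..(x₂ p.1 p.2), ρb ξ * w ξ) =
          G p.1 p.2 * Real.sqrt ((a₁ p.1 p.2) ^ 2 - a₀ p.1 p.2) :=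
  mass_and_momentum_integrals_analytic_factorization_general ρb w t₀ hρ hw a₀ a₁ ha₀ ha₁ h00 h10 x₁
    x₂ hx₁ hx₂
end

section
/- With ρ̄(0) = ρ₀ > 0, ω₁, ω₃ > 0, and X^±(t) = ±√(6ω₁²(t-t₀)/ω₃) + O(t-t₀), the mass captured by the singular point, m(t) = ∫_{X^-(t)}^{X^+(t)} ρ̄(ξ)dξ, satisfies m(t) = 2ω₁ρ₀√(6(t-t₀)/ω₃) + O(t-t₀) as t → t₀⁺. In particular m(t)/√(t-t₀) → 2ρ₀ω₁√(6/ω₃) > 0. -/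
/-!
Split the mass as `m = ρ₀ (X⁺ - X⁻) + ∫_{X⁻}^{X⁺} (ρ̄ - ρ₀)`. Both endpoints are
`O(√(t - t₀))`, and since `ρ̄ - ρ₀ = O(ξ)` near `0` the integral is
`O(X²) = O(t - t₀)`. The first term is `2 ω₁ ρ₀ √(6 (t - t₀) / ω₃) + O(t - t₀)` by the
expansions of `X^±`; dividing by `√(t - t₀)` gives the limit.
-/

open Topology Asymptotics intervalIntegral Filter

theorem intervalIntegral_zero_isBigO_sq {g : ℝ → ℝ} (hg : g =O[𝓝 0] fun x => x) :
    (fun x => ∫ ξ in 0..x, g ξ) =O[𝓝 0] fun x => x ^ 2 := by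
  obtain ⟨c, hc0, hc⟩ := hg.exists_pos
  obtain ⟨δ, hδ, hbound⟩ := Metric.eventually_nhds_iff.mp (isBigOWith_iff.mp hc)
  refine isBigO_iff.mpr ⟨c, ?_⟩
  filter_upwards [Metric.ball_mem_nhds 0 hδ] with x hx
  have hξ : ∀ ξ ∈ Set.uIoc 0 x, ‖g ξ‖ ≤ c * ‖x‖ := by
    intro ξ hξ
    have hξx : |ξ| ≤ |x| := by
      simpa using Set.abs_sub_left_of_mem_uIcc (Set.uIoc_subset_uIcc hξ)
    have hξδ : dist ξ 0 < δ := by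
      rw [Real.dist_0_eq_abs]
      exact hξx.trans_lt (by simpa using hx)
    exact (hbound hξδ).trans (mul_le_mul_of_nonneg_left hξx hc0.le)
  calc ‖∫ ξ in 0..x, g ξ‖ ≤ c * ‖x‖ * |x - 0| := norm_integral_le_of_norm_le_const hξ
    _ = c * ‖x ^ 2‖ := by simp [sq, mul_assoc]

theorem isBigO_intervalIntegral_sub_apply_zero {α : Type*} {l : Filter α} {f : ℝ → ℝ}
    (hfc : Continuous f) (hf : DifferentiableAt ℝ f 0) {u v s : α → ℝ}
    (hs : Tendsto s l (𝓝 0)) (hu : u =O[l] s) (hv : v =O[l] s) :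
    (fun t => ∫ ξ in u t..v t, (f ξ - f 0)) =O[l] fun t => s t ^ 2 := by
  set F : ℝ → ℝ := fun x => ∫ ξ in 0..x, (f ξ - f 0)
  have hF : F =O[𝓝 0] fun x => x ^ 2 :=
    intervalIntegral_zero_isBigO_sq (by simpa using hf.hasDerivAt.isBigO_sub)
  have hcomp : ∀ w : α → ℝ, w =O[l] s → (fun t => F (w t)) =O[l] fun t => s t ^ 2 :=
    fun w hw => (hF.comp_tendsto (hw.trans_tendsto hs)).trans (hw.pow 2)
  have hint : ∀ a b, IntervalIntegrable (fun ξ => f ξ - f 0) MeasureTheory.volume a b :=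
    fun a b => (hfc.sub continuous_const).intervalIntegrable a b
  refine ((hcomp v hv).sub (hcomp u hu)).congr_left fun t => ?_
  exact integral_interval_sub_left (hint 0 (v t)) (hint 0 (u t))

theorem tendsto_div_of_isBigO_sub_const_mul_sq {α : Type*} {l : Filter α} {g s : α → ℝ}
    {L : ℝ} (hs : Tendsto s l (𝓝 0)) (hs0 : ∀ᶠ t in l, s t ≠ 0)
    (h : (fun t => g t - L * s t) =O[l] fun t => s t ^ 2) :
    Tendsto (fun t => g t / s t) l (𝓝 L) := by
  have hdiv : (fun t => (g t - L * s t) / s t) =O[l] s := by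
    refine (h.mul (isBigO_refl (fun t => (s t)⁻¹) l)).trans_eventuallyEq ?_
    filter_upwards [hs0] with t ht
    field_simp
  have hlim := (hdiv.trans_tendsto hs).add_const L
  rw [zero_add] at hlim
  refine hlim.congr' ?_
  filter_upwards [hs0] with t ht
  field_simp
  ring

section SqrtGauge

variable (t₀ : ℝ)

theorem tendsto_sqrt_sub_nhdsGT : Tendsto (fun t => √(t - t₀)) (𝓝[>] t₀) (𝓝 0) := by
  simpa using ((continuous_sub_right t₀).sqrt.tendsto t₀).mono_left nhdsWithin_le_nhds

theorem sqrt_sub_sq_eventuallyEq : (fun t => √(t - t₀) ^ 2) =ᶠ[𝓝[>] t₀] fun t => t - t₀ := by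
  filter_upwards [self_mem_nhdsWithin] with t ht using Real.sq_sqrt (sub_nonneg.mpr ht.le)

theorem sub_isBigO_sqrt_sub : (fun t => t - t₀) =O[𝓝[>] t₀] fun t => √(t - t₀) := by
  refine ((isBigO_refl (fun t => √(t - t₀)) _).mul
    ((tendsto_sqrt_sub_nhdsGT t₀).isBigO_one ℝ)).congr' ?_ (by simp)
  filter_upwards [sqrt_sub_sq_eventuallyEq t₀] with t ht using (sq _).symm.trans ht

theorem sqrt_mul_sub_div_eventuallyEq (a b : ℝ) :
    (fun t => √(a * (t - t₀) / b)) =ᶠ[𝓝[>] t₀] fun t => √(a / b) * √(t - t₀) := by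
  filter_upwards [self_mem_nhdsWithin] with t ht
  rw [mul_div_right_comm, Real.sqrt_mul' _ (sub_nonneg.mpr ht.le)]

end SqrtGauge

theorem concentrated_mass_square_root_growth_general
    (ρb : ℝ → ℝ) (ρ₀ ω₁ ω₃ t₀ : ℝ)
    (hρ : AnalyticOnNhd ℝ ρb Set.univ)
    (hρ0 : ρb 0 = ρ₀)
    (hω₁ : 0 < ω₁)
    (Xp Xm : ℝ → ℝ)
    (hXp : (fun t => Xp t - Real.sqrt (6*ω₁^2*(t - t₀)/ω₃))
      =O[𝓝[>] t₀] (fun t => t - t₀))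
    (hXm : (fun t => Xm t + Real.sqrt (6*ω₁^2*(t - t₀)/ω₃))
      =O[𝓝[>] t₀] (fun t => t - t₀))
    (m : ℝ → ℝ) (hm : ∀ t, m t = ∫ ξ in (Xm t)..(Xp t), ρb ξ) :
    (fun t => m t - 2*ω₁*ρ₀*Real.sqrt (6*(t - t₀)/ω₃))
      =O[𝓝[>] t₀] (fun t => t - t₀) ∧
    Filter.Tendsto (fun t => m t / Real.sqrt (t - t₀)) (𝓝[>] t₀)
      (𝓝 (2*ρ₀*ω₁*Real.sqrt (6/ω₃))) := by
  set σ : ℝ → ℝ := fun t => √(6*ω₁^2*(t - t₀)/ω₃)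
  have hσ : σ =O[𝓝[>] t₀] fun t => √(t - t₀) :=
    ((isBigO_refl _ _).const_mul_left _).congr'
      (sqrt_mul_sub_div_eventuallyEq t₀ (6*ω₁^2) ω₃).symm EventuallyEq.rfl
  have hXp' := ((hXp.trans (sub_isBigO_sqrt_sub t₀)).add hσ).congr_left fun t => by ring
  have hXm' := ((hXm.trans (sub_isBigO_sqrt_sub t₀)).sub hσ).congr_left fun t => by ring
  have hsplit : ∀ t, m t - 2*ω₁*ρ₀*√(6*(t - t₀)/ω₃) =
      (∫ ξ in Xm t..Xp t, (ρb ξ - ρb 0)) + ρ₀ * ((Xp t - σ t) - (Xm t + σ t)) := by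
    intro t
    have hω : σ t = ω₁ * √(6*(t - t₀)/ω₃) := by
      rw [show σ t = √(ω₁^2 * (6*(t - t₀)/ω₃)) by simp only [σ]; ring_nf,
        Real.sqrt_mul (sq_nonneg _), Real.sqrt_sq hω₁.le]
    rw [hm, integral_sub (hρ.continuous.intervalIntegrable _ _) intervalIntegrable_const,
      integral_const, smul_eq_mul, hω, hρ0]
    ring
  have hmain : (fun t => m t - 2*ω₁*ρ₀*√(6*(t - t₀)/ω₃)) =O[𝓝[>] t₀]
      fun t => √(t - t₀) ^ 2 :=
    ((isBigO_intervalIntegral_sub_apply_zero hρ.continuous (hρ 0 trivial).differentiableAt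
      (tendsto_sqrt_sub_nhdsGT t₀) hXm' hXp').add
      (((hXp.sub hXm).const_mul_left ρ₀).trans_eventuallyEq
        (sqrt_sub_sq_eventuallyEq t₀).symm)).congr_left fun t => (hsplit t).symm
  refine ⟨hmain.trans_eventuallyEq (sqrt_sub_sq_eventuallyEq t₀),
    tendsto_div_of_isBigO_sub_const_mul_sq (tendsto_sqrt_sub_nhdsGT t₀) ?_ ?_⟩
  · filter_upwards [self_mem_nhdsWithin] with t ht
    exact (Real.sqrt_pos.mpr (sub_pos.mpr ht)).ne'
  · refine hmain.congr' ?_ EventuallyEq.rfl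
    filter_upwards [sqrt_mul_sub_div_eventuallyEq t₀ 6 ω₃] with t ht
    rw [ht]
    ring

theorem concentrated_mass_square_root_growth
    (ρb : ℝ → ℝ) (ρ₀ ω₁ ω₃ t₀ : ℝ)
    (hρ : AnalyticOnNhd ℝ ρb Set.univ)
    (hρ0 : ρb 0 = ρ₀) (hρpos : 0 < ρ₀)
    (hω₁ : 0 < ω₁) (hω₃ : 0 < ω₃) (ht₀ : t₀ = 1 / ω₁)
    (Xp Xm : ℝ → ℝ)
    (hXp : (fun t => Xp t - Real.sqrt (6*ω₁^2*(t - t₀)/ω₃))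
      =O[𝓝[>] t₀] (fun t => t - t₀))
    (hXm : (fun t => Xm t + Real.sqrt (6*ω₁^2*(t - t₀)/ω₃))
      =O[𝓝[>] t₀] (fun t => t - t₀))
    (m : ℝ → ℝ) (hm : ∀ t, m t = ∫ ξ in (Xm t)..(Xp t), ρb ξ) :
    (fun t => m t - 2*ω₁*ρ₀*Real.sqrt (6*(t - t₀)/ω₃))
      =O[𝓝[>] t₀] (fun t => t - t₀) ∧
    Filter.Tendsto (fun t => m t / Real.sqrt (t - t₀)) (𝓝[>] t₀)
      (𝓝 (2*ρ₀*ω₁*Real.sqrt (6/ω₃))) :=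
  concentrated_mass_square_root_growth_general ρb ρ₀ ω₁ ω₃ t₀ hρ hρ0 hω₁ Xp Xm hXp hXm m hm
end
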